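/- Let V be a vector space over a field K of characteristic zero, let A = T(V)₊ be the augmentation ideal of the tensor algebra T(V) (the span of words of positive length), viewed as a nonunital associative algebra under concatenation, and let * denote the unique extension of the concatenation product of A to the tensor algebra T(A). Then for all n, k ≥ 1 and all S₁, …, Sₙ, W₁, …, W_k ∈ A, writing S = S₁|…|Sₙ and W = W₁|…|W_k for the corresponding words in T(A) (| the product of T(A)): S * W = Σ_{f : {1,…,k} ↪ {1,…,n}} (S₁*W_{f⁻¹(1)})|…|(Sₙ*W_{f⁻¹(n)}), where the sum is over injective maps f, and for each i, Sᵢ*W_{f⁻¹(i)} means Sᵢ if f⁻¹(i) = ∅, and the concatenation Sᵢ·W_j in T(V) if f⁻¹(i) = {j}. In particular S * W = 0 if k > n. -/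

import Mathlib

open TensorProduct

/-- The counit of the tensor algebra `T(V)`: the unique algebra morphism `T(V) → K`
vanishing on `V`. -/
noncomputable def taCounit (K V : Type*) [Field K] [AddCommGroup V] [Module K V] :
    TensorAlgebra K V →ₐ[K] K :=
  TensorAlgebra.lift K (0 : V →ₗ[K] K)

/-- The unshuffle coproduct of the tensor algebra `T(V)`: the unique algebra morphism
`T(V) → T(V) ⊗ T(V)` with `Δ(v) = v ⊗ 1 + 1 ⊗ v` for `v ∈ V`. -/
noncomputable def taComul (K V : Type*) [Field K] [AddCommGroup V] [Module K V] :
    TensorAlgebra K V →ₐ[K] TensorAlgebra K V ⊗[K] TensorAlgebra K V :=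
  TensorAlgebra.lift K
    (((TensorProduct.mk K (TensorAlgebra K V) (TensorAlgebra K V)).flip 1
        + TensorProduct.mk K (TensorAlgebra K V) (TensorAlgebra K V) 1)
      ∘ₗ TensorAlgebra.ι K)

/-- The augmentation ideal `T(V)₊ = ker ε` of the tensor algebra, i.e. the span of words
of positive length, as a `K`-submodule of `T(V)`. -/
noncomputable def augIdeal (K V : Type*) [Field K] [AddCommGroup V] [Module K V] :
    Submodule K (TensorAlgebra K V) :=
  LinearMap.ker (taCounit K V).toLinearMap

/-- Concatenation of `T(V)` restricted to the augmentation ideal `T(V)₊`, making it a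
nonunital associative algebra. -/
noncomputable def augMul (K V : Type*) [Field K] [AddCommGroup V] [Module K V] :
    augIdeal K V →ₗ[K] augIdeal K V →ₗ[K] augIdeal K V :=
  LinearMap.mk₂ K
    (fun a b => ⟨(a : TensorAlgebra K V) * (b : TensorAlgebra K V), by
      have ha : taCounit K V (a : TensorAlgebra K V) = 0 := a.2
      simp [augIdeal, LinearMap.mem_ker, ha]⟩)
    (fun a a' b => by ext : 1; simp [add_mul])
    (fun c a b => by ext : 1; simp [smul_mul_assoc])
    (fun a b b' => by ext : 1; simp [mul_add])
    (fun c a b => by ext : 1; simp [mul_smul_comm])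

/-!
Induct on the length of `W`, splitting off its last letter `w` with the rule
`f * (g|w) = (f * g) * w - f * (g * w)`. Since `f * 1 = f` and `Δ w = w ⊗ 1 + 1 ⊗ w`, the rule
for `(f|g) * h` makes `f ↦ f * w` a derivation of `T(A)`, which on a sentence absorbs `w` into
one letter at a time. Expanding `(S * W') * w` by the induction hypothesis, the terms where `w`
lands in a letter that already absorbed some `W_j` sum, by associativity of `A`, to the
expansion of `S * (W' * w)`; the remaining terms are indexed by the injections extending one
for `W'` by a free position for `w`.
-/

@[simp]
lemma taComul_ι (K V : Type*) [Field K] [AddCommGroup V] [Module K V] (v : V) :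
    taComul K V (TensorAlgebra.ι K v)
      = TensorAlgebra.ι K v ⊗ₜ[K] 1 + 1 ⊗ₜ[K] TensorAlgebra.ι K v := by
  simp [taComul]

lemma augMul_assoc (K V : Type*) [Field K] [AddCommGroup V] [Module K V]
    (a b c : augIdeal K V) :
    augMul K V (augMul K V a b) c = augMul K V a (augMul K V b c) :=
  Subtype.ext (mul_assoc (a : TensorAlgebra K V) b c)

namespace Fin.Embedding

def snocEquiv (k : ℕ) (α : Type*) :
    (Σ f : Fin k ↪ α, {a // a ∉ Set.range f}) ≃ (Fin (k + 1) ↪ α) where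
  toFun q := snoc q.1 q.2.2
  invFun g := ⟨init g, g (Fin.last k), by
    rintro ⟨j, hj⟩
    exact (Fin.castSucc_lt_last j).ne (g.injective hj)⟩
  left_inv := by
    rintro ⟨f, a, ha⟩
    exact Sigma.subtype_ext (init_snoc f ha) snoc_last
  right_inv g := by
    ext i
    induction i using Fin.lastCases with
    | last => exact snoc_last
    | cast i => exact snoc_castSucc

lemma sum_sum_split_range {α β : Type*} [Fintype α] [DecidableEq α] [AddCommMonoid β]
    {k : ℕ} (F : (Fin k ↪ α) → α → β) :
    ∑ f, ∑ a, F f a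
      = ∑ j, ∑ f, F f (f j) + ∑ g : Fin (k + 1) ↪ α, F (init g) (g (Fin.last k)) := by
  classical
  have hsplit (f : Fin k ↪ α) : ∑ a, F f a
      = ∑ j, F f (f j) + ∑ a : {a // a ∉ Set.range f}, F f a.1 := by
    rw [← Fintype.sum_subtype_add_sum_subtype (· ∈ Set.range f) (F f)]
    congr 1
    convert (Fintype.sum_equiv (Equiv.ofInjective f f.injective) (fun j => F f (f j))
      (fun a => F f a.1) fun _ => rfl).symm
  have hsnoc : ∑ g : Fin (k + 1) ↪ α, F (init g) (g (Fin.last k))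
      = ∑ f : Fin k ↪ α, ∑ a : {a // a ∉ Set.range f}, F f a.1 := by
    rw [← Fintype.sum_equiv (snocEquiv k α) (fun q => F q.1 q.2) _ fun q => ?_,
      ← Finset.univ_sigma_univ, Finset.sum_sigma]
    simp [snocEquiv, init_snoc, snoc_last]
  rw [Fintype.sum_congr _ _ hsplit, Finset.sum_add_distrib, Finset.sum_comm, hsnoc]

end Fin.Embedding

section Sentences

variable {K M : Type*} [Field K] [AddCommGroup M] [Module K M]

variable (K) in
def sentence {m : ℕ} (S : Fin m → M) : TensorAlgebra K M :=
  (List.ofFn fun i => TensorAlgebra.ι K (S i)).prod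

lemma sentence_succ {m : ℕ} (S : Fin (m + 1) → M) :
    sentence K S = TensorAlgebra.ι K (S 0) * sentence K (Fin.tail S) := by
  rw [sentence, List.ofFn_succ, List.prod_cons]
  rfl

lemma sentence_snoc {m : ℕ} (S : Fin m → M) (w : M) :
    sentence K (Fin.snoc S w : Fin (m + 1) → M) = sentence K S * TensorAlgebra.ι K w := by
  rw [sentence, List.ofFn_succ', List.prod_concat]
  simp [sentence]

/-- The letters `Sᵢ * W_{f⁻¹(i)}` of the summand of `S * W` indexed by the injection `f`. -/
noncomputable def absorb (μ : M →ₗ[K] M →ₗ[K] M) {m k : ℕ} (S : Fin m → M) (W : Fin k → M)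
    (f : Fin k ↪ Fin m) (i : Fin m) : M :=
  if h : ∃ j, f j = i then μ (S i) (W h.choose) else S i

variable (μ : M →ₗ[K] M →ₗ[K] M) {m k : ℕ} (S : Fin m → M)

lemma absorb_apply_of_eq (W : Fin k → M) (f : Fin k ↪ Fin m) {i : Fin m} {j : Fin k}
    (hj : f j = i) : absorb μ S W f i = μ (S i) (W j) := by
  have h : ∃ j, f j = i := ⟨j, hj⟩
  rw [absorb, dif_pos h, f.injective (h.choose_spec.trans hj.symm)]

lemma absorb_apply_of_notMem (W : Fin k → M) (f : Fin k ↪ Fin m) {i : Fin m}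
    (hi : i ∉ Set.range f) : absorb μ S W f i = S i :=
  dif_neg hi

lemma absorb_of_isEmpty (W : Fin 0 → M) (f : Fin 0 ↪ Fin m) : absorb μ S W f = S :=
  funext fun _ => absorb_apply_of_notMem μ S W f fun ⟨j, _⟩ => j.elim0

lemma update_absorb_apply_self (hμ : ∀ a b c, μ (μ a b) c = μ a (μ b c))
    (W : Fin k → M) (f : Fin k ↪ Fin m) (j : Fin k) (w : M) :
    Function.update (absorb μ S W f) (f j) (μ (absorb μ S W f (f j)) w)
      = absorb μ S (Function.update W j (μ (W j) w)) f := by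
  ext i
  by_cases hi : i = f j
  · subst hi
    simp [absorb_apply_of_eq μ S _ f rfl, hμ]
  by_cases hr : i ∈ Set.range f
  · obtain ⟨j', rfl⟩ := hr
    have hj' : j' ≠ j := fun h => hi (h ▸ rfl)
    simp [hi, absorb_apply_of_eq μ S _ f rfl, hj']
  · simp [hi, absorb_apply_of_notMem μ S _ f hr]

lemma update_absorb_init (W : Fin k → M) (w : M) (g : Fin (k + 1) ↪ Fin m) :
    Function.update (absorb μ S W (Fin.Embedding.init g)) (g (Fin.last k))
        (μ (absorb μ S W (Fin.Embedding.init g) (g (Fin.last k))) w)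
      = absorb μ S (Fin.snoc W w) g := by
  have hlast : g (Fin.last k) ∉ Set.range (Fin.Embedding.init g) := by
    rintro ⟨j, hj⟩
    exact (Fin.castSucc_lt_last j).ne (g.injective hj)
  ext i
  by_cases hi : i = g (Fin.last k)
  · subst hi
    simp [absorb_apply_of_notMem μ S W _ hlast, absorb_apply_of_eq μ S _ g rfl]
  by_cases hr : i ∈ Set.range g
  · obtain ⟨j, rfl⟩ := hr
    induction j using Fin.lastCases with
    | last => exact absurd rfl hi
    | cast j =>
      simp [hi, absorb_apply_of_eq μ S _ g rfl,
        absorb_apply_of_eq μ S W (Fin.Embedding.init g) (i := g j.castSucc) (j := j) rfl]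
  · have hr' : i ∉ Set.range (Fin.Embedding.init g) := fun ⟨j, hj⟩ => hr ⟨_, hj⟩
    simp [hi, absorb_apply_of_notMem μ S _ _ hr, absorb_apply_of_notMem μ S _ _ hr']

end Sentences

section Extension

variable {K M : Type*} [Field K] [AddCommGroup M] [Module K M]
  {B : TensorAlgebra K M →ₗ[K] TensorAlgebra K M →ₗ[K] TensorAlgebra K M}

lemma leibniz_ι (hone : ∀ f, B f 1 = f)
    (hmul : ∀ f g h, B (f * g) h
        = TensorProduct.lift ((LinearMap.mul K (TensorAlgebra K M)).compl₁₂ (B f) (B g))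
            (taComul K M h))
    (f g : TensorAlgebra K M) (y : M) :
    B (f * g) (TensorAlgebra.ι K y)
      = B f (TensorAlgebra.ι K y) * g + f * B g (TensorAlgebra.ι K y) := by
  simp [hmul, hone]

lemma apply_one_ι (hone : ∀ f, B f 1 = f)
    (hmul : ∀ f g h, B (f * g) h
        = TensorProduct.lift ((LinearMap.mul K (TensorAlgebra K M)).compl₁₂ (B f) (B g))
            (taComul K M h))
    (y : M) : B 1 (TensorAlgebra.ι K y) = 0 := by
  have h := leibniz_ι hone hmul 1 1 y
  simp only [mul_one, one_mul] at h
  exact left_eq_add.mp h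

lemma apply_sentence_ι {μ : M →ₗ[K] M →ₗ[K] M}
    (hagree : ∀ a b, B (TensorAlgebra.ι K a) (TensorAlgebra.ι K b) = TensorAlgebra.ι K (μ a b))
    (hone : ∀ f, B f 1 = f)
    (hmul : ∀ f g h, B (f * g) h
        = TensorProduct.lift ((LinearMap.mul K (TensorAlgebra K M)).compl₁₂ (B f) (B g))
            (taComul K M h))
    {m : ℕ} (T : Fin m → M) (y : M) :
    B (sentence K T) (TensorAlgebra.ι K y)
      = ∑ i, sentence K (Function.update T i (μ (T i) y)) := by
  induction m with
  | zero => simp [sentence, apply_one_ι hone hmul]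
  | succ m ih =>
    rw [sentence_succ, leibniz_ι hone hmul, hagree, ih, Finset.mul_sum, Fin.sum_univ_succ]
    simp only [sentence_succ, Function.update_self, Fin.tail_update_zero, Fin.tail_update_succ,
      Function.update_of_ne (Fin.succ_ne_zero _).symm]
    rfl

lemma apply_sentence_sentence {μ : M →ₗ[K] M →ₗ[K] M}
    (hμ : ∀ a b c, μ (μ a b) c = μ a (μ b c))
    (hagree : ∀ a b, B (TensorAlgebra.ι K a) (TensorAlgebra.ι K b) = TensorAlgebra.ι K (μ a b))
    (hone : ∀ f, B f 1 = f)
    (hword : ∀ f g y, B f (g * TensorAlgebra.ι K y)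
        = B (B f g) (TensorAlgebra.ι K y) - B f (B g (TensorAlgebra.ι K y)))
    (hmul : ∀ f g h, B (f * g) h
        = TensorProduct.lift ((LinearMap.mul K (TensorAlgebra K M)).compl₁₂ (B f) (B g))
            (taComul K M h))
    {m k : ℕ} (S : Fin m → M) (W : Fin k → M) :
    B (sentence K S) (sentence K W) = ∑ f : Fin k ↪ Fin m, sentence K (absorb μ S W f) := by
  induction k with
  | zero => simp [sentence, hone, absorb_of_isEmpty]
  | succ k ih =>
    rw [← Fin.snoc_init_self W]
    set w := W (Fin.last k)
    set W' := Fin.init W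
    calc B (sentence K S) (sentence K (Fin.snoc W' w))
        = B (B (sentence K S) (sentence K W')) (TensorAlgebra.ι K w)
            - B (sentence K S) (B (sentence K W') (TensorAlgebra.ι K w)) := by
          rw [sentence_snoc, hword]
      _ = ∑ f : Fin k ↪ Fin m, ∑ i, sentence K (Function.update (absorb μ S W' f) i
              (μ (absorb μ S W' f i) w))
            - ∑ j, ∑ f : Fin k ↪ Fin m,
                sentence K (absorb μ S (Function.update W' j (μ (W' j) w)) f) := by
          simp only [ih, map_sum, LinearMap.sum_apply, apply_sentence_ι hagree hone hmul]
      _ = ∑ g : Fin (k + 1) ↪ Fin m, sentence K (absorb μ S (Fin.snoc W' w) g) := by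
          rw [Fin.Embedding.sum_sum_split_range]
          simp only [update_absorb_apply_self μ S hμ, update_absorb_init]
          exact add_sub_cancel_left _ _

end Extension

theorem statement19_general {K V : Type*} [Field K] [AddCommGroup V] [Module K V]
    (B : TensorAlgebra K (augIdeal K V) →ₗ[K]
          TensorAlgebra K (augIdeal K V) →ₗ[K] TensorAlgebra K (augIdeal K V))
    (hagree : ∀ a b : augIdeal K V,
      B (TensorAlgebra.ι K a) (TensorAlgebra.ι K b) = TensorAlgebra.ι K (augMul K V a b))
    (hone : ∀ f, B f 1 = f)
    (hword : ∀ f g (y : augIdeal K V), B f (g * TensorAlgebra.ι K y)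
        = B (B f g) (TensorAlgebra.ι K y) - B f (B g (TensorAlgebra.ι K y)))
    (hmul : ∀ f g h, B (f * g) h
        = TensorProduct.lift
            ((LinearMap.mul K (TensorAlgebra K (augIdeal K V))).compl₁₂ (B f) (B g))
            (taComul K (augIdeal K V) h)) :
    ∀ (n k : ℕ) (S : Fin (n + 1) → augIdeal K V) (W : Fin (k + 1) → augIdeal K V),
      (B ((List.ofFn fun i => TensorAlgebra.ι K (S i)).prod)
          ((List.ofFn fun j => TensorAlgebra.ι K (W j)).prod)
        = ∑ f : Fin (k + 1) ↪ Fin (n + 1),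
            (List.ofFn fun i => TensorAlgebra.ι K
              (if h : ∃ j, f j = i then augMul K V (S i) (W h.choose) else S i)).prod)
      ∧ (n < k →
          B ((List.ofFn fun i => TensorAlgebra.ι K (S i)).prod)
              ((List.ofFn fun j => TensorAlgebra.ι K (W j)).prod) = 0) := by
  intro n k S W
  have hexpand := apply_sentence_sentence (augMul_assoc K V) hagree hone hword hmul S W
  refine ⟨hexpand, fun hlt => ?_⟩
  have : IsEmpty (Fin (k + 1) ↪ Fin (n + 1)) :=
    Function.Embedding.isEmpty_of_card_lt (by simpa using hlt)
  exact hexpand.trans (Finset.sum_of_isEmpty _)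

/-- Let `A = T(V)₊` with concatenation, and let `B` be the unique
extension (characterized by properties (i)–(vii)) of this product to the tensor algebra
`T(A)` (whose product is written `*`, playing the role of `|`).  Then for sentences
`S = S₀|…|Sₙ` and `W = W₀|…|W_k`,
`S * W = Σ_{f : {0,…,k} ↪ {0,…,n}} (S₀*W_{f⁻¹(0)})|…|(Sₙ*W_{f⁻¹(n)})`,
and `S * W = 0` whenever `k > n`. -/
theorem statement19 {K V : Type*} [Field K] [CharZero K] [AddCommGroup V] [Module K V]
    (B : TensorAlgebra K (augIdeal K V) →ₗ[K]
          TensorAlgebra K (augIdeal K V) →ₗ[K] TensorAlgebra K (augIdeal K V))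
    (hagree : ∀ a b : augIdeal K V,
      B (TensorAlgebra.ι K a) (TensorAlgebra.ι K b) = TensorAlgebra.ι K (augMul K V a b))
    (hcounit : ∀ f g, taCounit K (augIdeal K V) (B f g)
        = taCounit K (augIdeal K V) f * taCounit K (augIdeal K V) g)
    (hcomul : ∀ f g, taComul K (augIdeal K V) (B f g)
        = TensorProduct.map₂ B B (taComul K (augIdeal K V) f) (taComul K (augIdeal K V) g))
    (hone : ∀ f, B f 1 = f)
    (hone' : ∀ f, B 1 f
        = taCounit K (augIdeal K V) f • (1 : TensorAlgebra K (augIdeal K V)))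
    (hword : ∀ f g (y : augIdeal K V), B f (g * TensorAlgebra.ι K y)
        = B (B f g) (TensorAlgebra.ι K y) - B f (B g (TensorAlgebra.ι K y)))
    (hmul : ∀ f g h, B (f * g) h
        = TensorProduct.lift
            ((LinearMap.mul K (TensorAlgebra K (augIdeal K V))).compl₁₂ (B f) (B g))
            (taComul K (augIdeal K V) h))
    (hBB : ∀ f g h, B (B f g) h
        = B f (TensorProduct.lift
            ((LinearMap.mul K (TensorAlgebra K (augIdeal K V))).compl₁₂ (B g) LinearMap.id)
            (taComul K (augIdeal K V) h))) :
    ∀ (n k : ℕ) (S : Fin (n + 1) → augIdeal K V) (W : Fin (k + 1) → augIdeal K V),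
      (B ((List.ofFn fun i => TensorAlgebra.ι K (S i)).prod)
          ((List.ofFn fun j => TensorAlgebra.ι K (W j)).prod)
        = ∑ f : Fin (k + 1) ↪ Fin (n + 1),
            (List.ofFn fun i => TensorAlgebra.ι K
              (if h : ∃ j, f j = i then augMul K V (S i) (W h.choose) else S i)).prod)
      ∧ (n < k →
          B ((List.ofFn fun i => TensorAlgebra.ι K (S i)).prod)
              ((List.ofFn fun j => TensorAlgebra.ι K (W j)).prod) = 0) :=
  statement19_general B hagree hone hword hmul
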